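/- Let S be a monic subset of the free left k⟨X⟩-module Mod_{k⟨X⟩}⟨Y⟩ = ⊕_{y∈Y} k⟨X⟩y, with the ordering on X*Y defined by comparing the X*-parts by a monomial ordering and then the Y-letters. If every element f of the submodule k⟨X⟩·S generated by S has leading monomial of the form a·s̄ for some a ∈ X* and s ∈ S, then Irr(S) = {w ∈ X*Y : w ≠ a s̄ for all a ∈ X*, s ∈ S} is a k-linear basis of the quotient module Mod_{k⟨X⟩}⟨Y⟩ / k⟨X⟩·S. -/

import Mathlib

variable {k X Y : Type*} [Field k] [LinearOrder (FreeMonoid X)] [LinearOrder Y]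

/-- The free left `k⟨X⟩`-module with basis `Y`, with `k`-basis the set `X*Y`,
ordered lexicographically (first the `X*`-part, then the `Y`-letter). -/
abbrev FreeMod (k X Y : Type*) [Field k] := Lex (FreeMonoid X × Y) →₀ k

/-- The leading (maximal) monomial `f̄ ∈ X*Y` of a nonzero element. -/
noncomputable def lw (f : FreeMod k X Y) (hf : f ≠ 0) : Lex (FreeMonoid X × Y) :=
  f.support.max' (Finsupp.support_nonempty_iff.mpr hf)

/-- Left multiplication of an element of the free module by a monomial `a ∈ X*`. -/
noncomputable def shift (a : FreeMonoid X) (s : FreeMod k X Y) : FreeMod k X Y :=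
  Finsupp.mapDomain (fun p => toLex (a * (ofLex p).1, (ofLex p).2)) s

/-- The `k⟨X⟩`-submodule generated by `S`, as the `k`-span of `{a·s : a ∈ X*, s ∈ S}`. -/
noncomputable def modSpan (S : Set (FreeMod k X Y)) : Submodule k (FreeMod k X Y) :=
  Submodule.span k {x | ∃ (a : FreeMonoid X) (s : FreeMod k X Y), s ∈ S ∧ x = shift a s}

/-- `Irr S`: the monomials `w ∈ X*Y` not of the form `a·s̄` for `a ∈ X*`, `s ∈ S`. -/
def IrrMod (S : Set (FreeMod k X Y)) : Set (Lex (FreeMonoid X × Y)) :=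
  {w | ¬ ∃ (a : FreeMonoid X) (s : FreeMod k X Y) (_ : s ∈ S) (h0 : s ≠ 0),
    w = toLex (a * (ofLex (lw s h0)).1, (ofLex (lw s h0)).2)}

/-!
Monomials outside `Irr S` are leading monomials of elements `a·s` of the submodule, so by
well-founded induction every monomial is congruent to a combination of irreducible ones.
Conversely, a nonzero element of the submodule has a reducible leading monomial by hypothesis,
so it cannot be supported on `Irr S`: the span of `Irr S` meets the submodule trivially.
-/

namespace Finsupp

variable {ι R : Type*}

theorem linearIndependent_mk_single_of_disjoint [Ring R] (p : Submodule R (ι →₀ R))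
    (I : Set ι) (hI : Disjoint (supported R R I) p) :
    LinearIndependent R fun w : I => Submodule.Quotient.mk (p := p) (single (w : ι) (1 : R)) := by
  refine ((linearIndependent_single_one R ι).comp _ Subtype.val_injective).map (f := p.mkQ) ?_
  rwa [Submodule.ker_mkQ, Set.range_comp (fun i => single i (1 : R)) Subtype.val,
    Subtype.range_coe, ← supported_eq_span_single]

theorem sub_single_mem_supported_Iio [LinearOrder ι] [Ring R] {g : ι →₀ R} {w : ι}
    (hg : ∀ u ∈ g.support, u ≤ w) : g - single w (g w) ∈ supported R R (Set.Iio w) := by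
  rw [mem_supported']
  intro u hu
  rcases eq_or_ne u w with rfl | huw
  · simp
  have hgu : g u = 0 := by
    by_contra hne
    exact hu (lt_of_le_of_ne (hg u (mem_support_iff.mpr hne)) huw)
  simp [hgu, Ne.symm huw]

theorem span_mk_single_eq_top_of_leading [LinearOrder ι] [WellFoundedLT ι] [DivisionRing R]
    (p : Submodule R (ι →₀ R)) (I : Set ι)
    (hlead : ∀ w ∉ I, ∃ g ∈ p, g w ≠ 0 ∧ ∀ u ∈ g.support, u ≤ w) :
    Submodule.span R (Set.range fun w : I =>
      Submodule.Quotient.mk (p := p) (single (w : ι) (1 : R))) = ⊤ := by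
  set N := Submodule.span R (Set.range fun w : I =>
      Submodule.Quotient.mk (p := p) (single (w : ι) (1 : R)))
  set T := N.comap p.mkQ
  have hsingle : ∀ w, single w (1 : R) ∈ T := by
    intro w
    induction w using WellFoundedLT.induction with
    | _ w ih =>
      by_cases hw : w ∈ I
      · exact Submodule.subset_span ⟨⟨w, hw⟩, rfl⟩
      obtain ⟨g, hgp, hgw, hg_le⟩ := hlead w hw
      have hlower : g - single w (g w) ∈ T := by
        have h := sub_single_mem_supported_Iio hg_le
        rw [supported_eq_span_single] at h
        exact Submodule.span_le.mpr (by rintro _ ⟨u, hu, rfl⟩; exact ih u hu) h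
      have hw_eq : single w (1 : R) = (g w)⁻¹ • (g - (g - single w (g w))) := by
        simp [inv_mul_cancel₀ hgw]
      rw [hw_eq]
      exact T.smul_mem _ (T.sub_mem (Submodule.le_comap_mkQ p N hgp) hlower)
  have hT : T = ⊤ := by
    rw [eq_top_iff, ← (Finsupp.basisSingleOne (R := R) (ι := ι)).span_eq, Submodule.span_le]
    rintro _ ⟨u, rfl⟩
    simpa using hsingle u
  rw [← Submodule.map_comap_eq_of_surjective (Submodule.mkQ_surjective p) N]
  change T.map p.mkQ = ⊤
  rw [hT, Submodule.map_top, Submodule.range_mkQ]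

end Finsupp

noncomputable def shiftMap (a : FreeMonoid X) (p : Lex (FreeMonoid X × Y)) :
    Lex (FreeMonoid X × Y) :=
  toLex (a * (ofLex p).1, (ofLex p).2)

section Cancel

omit [LinearOrder (FreeMonoid X)] [LinearOrder Y]

theorem shiftMap_injective (a : FreeMonoid X) :
    Function.Injective (shiftMap (X := X) (Y := Y) a) := by
  intro p q h
  obtain ⟨h1, h2⟩ := Prod.mk.inj (toLex.injective h)
  exact ofLex.injective (Prod.ext (mul_left_cancel h1) h2)

theorem shift_apply_shiftMap (a : FreeMonoid X) (s : FreeMod k X Y)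
    (p : Lex (FreeMonoid X × Y)) : shift a s (shiftMap a p) = s p :=
  Finsupp.mapDomain_apply (shiftMap_injective a) s p

end Cancel

theorem shiftMap_strictMono
    (hmul : ∀ (a : FreeMonoid X) (u v : FreeMonoid X), u < v → a * u < a * v)
    (a : FreeMonoid X) : StrictMono (shiftMap (X := X) (Y := Y) a) := by
  intro p q hpq
  rcases Prod.Lex.lt_iff.mp (show toLex (ofLex p) < toLex (ofLex q) from hpq) with h | ⟨h1, h2⟩
  · exact Prod.Lex.lt_iff.mpr (Or.inl (hmul a _ _ h))
  · exact Prod.Lex.lt_iff.mpr (Or.inr ⟨congrArg (a * ·) h1, h2⟩)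

theorem lw_mem_support (f : FreeMod k X Y) (hf : f ≠ 0) : lw f hf ∈ f.support :=
  Finset.max'_mem _ _

theorem le_lw {f : FreeMod k X Y} (hf : f ≠ 0) {u : Lex (FreeMonoid X × Y)}
    (hu : u ∈ f.support) : u ≤ lw f hf :=
  Finset.le_max' _ _ hu

theorem le_shiftMap_lw_of_mem_support_shift
    (hmul : ∀ (a : FreeMonoid X) (u v : FreeMonoid X), u < v → a * u < a * v)
    (a : FreeMonoid X) {s : FreeMod k X Y} (hs : s ≠ 0) {u : Lex (FreeMonoid X × Y)}
    (hu : u ∈ (shift a s).support) : u ≤ shiftMap a (lw s hs) := by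
  classical
  obtain ⟨v, hv, rfl⟩ : ∃ v ∈ s.support, shiftMap a v = u :=
    Finset.mem_image.mp (Finsupp.mapDomain_support hu)
  exact (shiftMap_strictMono hmul a).monotone (le_lw hs hv)

theorem irrMod_basis_of_CD_general [WellFoundedLT (FreeMonoid X)] [WellFoundedLT Y]
    (hmul : ∀ (a : FreeMonoid X) (u v : FreeMonoid X), u < v → a * u < a * v)
    (S : Set (FreeMod k X Y)) (hS0 : ∀ s ∈ S, s ≠ 0)
    (hCD : ∀ f ∈ modSpan S, ∀ hf : f ≠ 0,
      ∃ (a : FreeMonoid X) (s : FreeMod k X Y) (hs : s ∈ S),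
        lw f hf = toLex (a * (ofLex (lw s (hS0 s hs))).1, (ofLex (lw s (hS0 s hs))).2)) :
    LinearIndependent k (fun w : IrrMod S =>
      Submodule.Quotient.mk (p := modSpan S)
        (Finsupp.single (w : Lex (FreeMonoid X × Y)) (1 : k))) ∧
    Submodule.span k (Set.range fun w : IrrMod S =>
      Submodule.Quotient.mk (p := modSpan S)
        (Finsupp.single (w : Lex (FreeMonoid X × Y)) (1 : k))) = ⊤ := by
  constructor
  · refine Finsupp.linearIndependent_mk_single_of_disjoint _ _ (Submodule.disjoint_def.mpr ?_)
    intro f hf_irr hf_span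
    by_contra hf
    obtain ⟨a, s, hs, hlw⟩ := hCD f hf_span hf
    exact (Finsupp.mem_supported k f).mp hf_irr (lw_mem_support f hf) ⟨a, s, hs, hS0 s hs, hlw⟩
  · refine Finsupp.span_mk_single_eq_top_of_leading _ _ fun w hw => ?_
    obtain ⟨a, s, hs, h0, rfl⟩ := not_not.mp hw
    refine ⟨shift a s, Submodule.subset_span ⟨a, s, hs, rfl⟩, ?_,
      fun u hu => le_shiftMap_lw_of_mem_support_shift hmul a h0 hu⟩
    exact (shift_apply_shiftMap a s _).trans_ne (Finsupp.mem_support_iff.mp (lw_mem_support s h0))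

/-- Composition–Diamond lemma for modules, (ii) ⇒ (iii): if every nonzero element of the
submodule generated by the monic set `S` has leading monomial of the form `a·s̄`, then
`Irr S` is a `k`-linear basis of the quotient module. -/
theorem irrMod_basis_of_CD [WellFoundedLT (FreeMonoid X)] [WellFoundedLT Y]
    (hmul : ∀ (a : FreeMonoid X) (u v : FreeMonoid X), u < v → a * u < a * v)
    (S : Set (FreeMod k X Y)) (hS0 : ∀ s ∈ S, s ≠ 0)
    (hmonic : ∀ (s) (hs : s ∈ S), s (lw s (hS0 s hs)) = 1)
    (hCD : ∀ f ∈ modSpan S, ∀ hf : f ≠ 0,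
      ∃ (a : FreeMonoid X) (s : FreeMod k X Y) (hs : s ∈ S),
        lw f hf = toLex (a * (ofLex (lw s (hS0 s hs))).1, (ofLex (lw s (hS0 s hs))).2)) :
    LinearIndependent k (fun w : IrrMod S =>
      Submodule.Quotient.mk (p := modSpan S)
        (Finsupp.single (w : Lex (FreeMonoid X × Y)) (1 : k))) ∧
    Submodule.span k (Set.range fun w : IrrMod S =>
      Submodule.Quotient.mk (p := modSpan S)
        (Finsupp.single (w : Lex (FreeMonoid X × Y)) (1 : k))) = ⊤ :=
  irrMod_basis_of_CD_general hmul S hS0 hCD
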